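/- arXiv:1403.3718 — 2 statements merged into one kernel-verified Lean document; each statement's English description precedes it below -/
import Mathlib

section
/- Let α, β, γ be real numbers and let f be the quadratic form on 3×3 real matrices associated with a rank-four tensor having linear elastic cubic symmetry, namely f(ξ) = α(ξ₁₁² + ξ₂₂² + ξ₃₃²) + 2β(ξ₁₁ξ₂₂ + ξ₂₂ξ₃₃ + ξ₃₃ξ₁₁) + γ(ξ₁₂² + ξ₂₁² + ξ₁₃² + ξ₃₁² + ξ₂₃² + ξ₃₂²) + 2γ(ξ₁₂ξ₂₁ + ξ₁₃ξ₃₁ + ξ₂₃ξ₃₂). If f is quasiconvex, i.e. f(x ⊗ y) ≥ 0 for all x, y ∈ ℝ³, then f is polyconvex: there exist a quadratic form g on 3×3 real matrices with g(η) ≥ 0 for all η ∈ ℝ^{3×3} and real coefficients c_{ij} (1 ≤ i, j ≤ 3) such that f(η) = g(η) + Σ_{i,j} c_{ij} M_{ij}(η) for all η ∈ ℝ^{3×3}. -/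
/-- The tensor (outer) product of two vectors in ℝ³, as a 3×3 matrix. -/
def outer (x y : Fin 3 → ℝ) : Matrix (Fin 3) (Fin 3) ℝ :=
  fun i j => x i * y j

/-- The quadratic form associated with a rank-four tensor having linear elastic
cubic symmetry, with parameters `α, β, γ`. -/
def cubicForm (α β γ : ℝ) (ξ : Matrix (Fin 3) (Fin 3) ℝ) : ℝ :=
  α * (ξ 0 0 ^ 2 + ξ 1 1 ^ 2 + ξ 2 2 ^ 2)
    + 2 * β * (ξ 0 0 * ξ 1 1 + ξ 1 1 * ξ 2 2 + ξ 2 2 * ξ 0 0)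
    + γ * (ξ 0 1 ^ 2 + ξ 1 0 ^ 2 + ξ 0 2 ^ 2 + ξ 2 0 ^ 2 + ξ 1 2 ^ 2 + ξ 2 1 ^ 2)
    + 2 * γ * (ξ 0 1 * ξ 1 0 + ξ 0 2 * ξ 2 0 + ξ 1 2 * ξ 2 1)

/-- The 2×2 minor of a 3×3 matrix obtained by deleting row `i` and column `j`
(with rows and columns of the submatrix taken in cyclic order). -/
def minor (i j : Fin 3) (η : Matrix (Fin 3) (Fin 3) ℝ) : ℝ :=
  η (i + 1) (j + 1) * η (i + 2) (j + 2) - η (i + 1) (j + 2) * η (i + 2) (j + 1)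

noncomputable def gForm (α β γ t : ℝ) : QuadraticForm ℝ (Matrix (Fin 3) (Fin 3) ℝ) :=
  QuadraticMap.ofPolar
    (fun η => cubicForm α β γ η - t * (minor 0 0 η + minor 1 1 η + minor 2 2 η))
    (by
      intro a x
      simp only [cubicForm, minor, Matrix.smul_apply, smul_eq_mul]
      ring)
    (by
      intro x x' y
      simp only [QuadraticMap.polar, cubicForm, minor, Matrix.add_apply]
      ring)
    (by
      intro a x y
      simp only [QuadraticMap.polar, cubicForm, minor, Matrix.add_apply,
        Matrix.smul_apply, smul_eq_mul]
      ring)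

lemma gForm_apply (α β γ t : ℝ) (η : Matrix (Fin 3) (Fin 3) ℝ) :
    gForm α β γ t η
      = cubicForm α β γ η - t * (minor 0 0 η + minor 1 1 η + minor 2 2 η) := rfl


/-- if the cubic-symmetric quadratic form `f` is quasiconvex, then it is
polyconvex: it is the sum of a pointwise nonnegative quadratic form and a linear
combination of 2×2 minors (a null-Lagrangian). -/
theorem cubic_quasiconvex_implies_polyconvex (α β γ : ℝ)
    (hqc : ∀ x y : Fin 3 → ℝ, 0 ≤ cubicForm α β γ (outer x y)) :
    ∃ g : QuadraticForm ℝ (Matrix (Fin 3) (Fin 3) ℝ), (∀ η, 0 ≤ g η) ∧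
      ∃ c : Fin 3 → Fin 3 → ℝ,
        ∀ η : Matrix (Fin 3) (Fin 3) ℝ,
          cubicForm α β γ η = g η + ∑ i : Fin 3, ∑ j : Fin 3, c i j * minor i j η := by
  have hα : 0 ≤ α := by
    have := hqc ![1,0,0] ![1,0,0]
    simpa [cubicForm, outer] using this
  have hγ : 0 ≤ γ := by
    have := hqc ![1,0,0] ![0,1,0]
    simpa [cubicForm, outer] using this
  have hαβ : β ≤ α := by
    have := hqc ![1,1,0] ![1,-1,0]
    simp [cubicForm, outer] at this
    nlinarith [this]
  have hs : 0 ≤ α + 2*β + 4*γ := by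
    have := hqc ![1,1,1] ![1,1,1]
    simp [cubicForm, outer] at this
    nlinarith [this]
  set t : ℝ := max (2*(β-α)) (-(4*γ)) with ht
  have ht1 : 2*(β-α) ≤ t := le_max_left _ _
  have ht2 : -(4*γ) ≤ t := le_max_right _ _
  have ht0 : t ≤ 0 := max_le (by linarith) (by linarith)
  have ht3 : t ≤ α + 2*β := max_le (by linarith) (by linarith)
  refine ⟨gForm α β γ t, ?_, fun i j => if i = j then t else 0, ?_⟩
  · intro η
    rw [gForm_apply]
    have m0 : minor 0 0 η = η 1 1 * η 2 2 - η 1 2 * η 2 1 := rfl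
    have m1 : minor 1 1 η = η 2 2 * η 0 0 - η 2 0 * η 0 2 := rfl
    have m2 : minor 2 2 η = η 0 0 * η 1 1 - η 0 1 * η 1 0 := rfl
    rw [m0, m1, m2]
    simp only [cubicForm]
    have h1 : 0 ≤ (α + 2*β - t) * (η 0 0 + η 1 1 + η 2 2)^2 :=
      mul_nonneg (by linarith) (sq_nonneg _)
    have h2 : 0 ≤ (α - β + t/2) * ((η 0 0 - η 1 1)^2 + (η 1 1 - η 2 2)^2 + (η 2 2 - η 0 0)^2) :=
      mul_nonneg (by linarith) (by positivity)
    have h3 : 0 ≤ (4*γ + t) * ((η 0 1 + η 1 0)^2 + (η 0 2 + η 2 0)^2 + (η 1 2 + η 2 1)^2) :=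
      mul_nonneg (by linarith) (by positivity)
    have h4 : 0 ≤ (-t) * ((η 0 1 - η 1 0)^2 + (η 0 2 - η 2 0)^2 + (η 1 2 - η 2 1)^2) :=
      mul_nonneg (by linarith) (by positivity)
    ring_nf
    ring_nf at h1 h2 h3 h4
    linarith [h1, h2, h3, h4]
  · intro η
    rw [gForm_apply]
    simp only [Fin.sum_univ_three]
    norm_num [Fin.ext_iff]
    ring
end

section
/- Let α, β, γ be real numbers and let f(ξ) = α(ξ₁₁² + ξ₂₂² + ξ₃₃²) + 2β(ξ₁₁ξ₂₂ + ξ₂₂ξ₃₃ + ξ₃₃ξ₁₁) + γ(ξ₁₂² + ξ₂₁² + ξ₁₃² + ξ₃₁² + ξ₂₃² + ξ₃₂²) + 2γ(ξ₁₂ξ₂₁ + ξ₁₃ξ₃₁ + ξ₂₃ξ₃₂) be the quadratic form with linear elastic cubic symmetry. If f(x ⊗ y) ≥ 0 for all x, y ∈ ℝ³, then α ≥ 0, γ ≥ 0, and −α/2 − 2γ ≤ β ≤ α (equivalently, −α/2 − γ ≤ β + γ ≤ α + γ). -/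
/-- if the cubic-symmetric quadratic form `f` is quasiconvex, then
`α ≥ 0`, `γ ≥ 0` and `−α/2 − 2γ ≤ β ≤ α`. -/
theorem cubic_quasiconvex_necessary (α β γ : ℝ)
    (hqc : ∀ x y : Fin 3 → ℝ, 0 ≤ cubicForm α β γ (outer x y)) :
    0 ≤ α ∧ 0 ≤ γ ∧ -α / 2 - 2 * γ ≤ β ∧ β ≤ α := by
  have h1 := hqc ![1, 0, 0] ![1, 0, 0]
  have h2 := hqc ![1, 0, 0] ![0, 1, 0]
  have h3 := hqc ![1, 1, 1] ![1, 1, 1]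
  have h4 := hqc ![1, -1, 0] ![1, 1, 0]
  simp [cubicForm, outer] at h1 h2 h3 h4
  refine ⟨by linarith, by linarith, by linarith, by linarith⟩
end
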